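/- Let L > 0, P > 0 and R > 0, and set α = (e^R − 1)/P. Define W(x) = Q( √L (log(1+xP) − R) / √(1 − 1/(1+xP)²) ) for x > 0, where Q is the Gaussian Q-function. Then W(α) = 1/2, W is differentiable at α, and its derivative at α equals −√( L P² / (2π (e^{2R} − 1)) ). (This justifies the tangent-line value μ = √(LP²/(2π(e^{2R}−1))) used in the semi-linear approximation of the error probability.) -/

import Mathlib

/-!
The argument of Q in `W` vanishes at `1 + αP = e^R`, so `W α = Q 0 = 1/2`. Since the
numerator vanishes there, the quotient rule reduces the derivative of the argument to
numerator' / denominator, i.e. `√L · (P / e^R) / (√(e^{2R} - 1) / e^R) = √L P / √(e^{2R} - 1)`,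
and the chain rule multiplies this by `Q'(0) = -1/√(2π)`.
-/

open MeasureTheory Real

/-- The Gaussian Q-function Q(x) = (1/√(2π)) ∫_x^∞ e^{-t²/2} dt. -/
noncomputable def gaussQ (x : ℝ) : ℝ :=
  (1 / Real.sqrt (2 * Real.pi)) * ∫ t in Set.Ioi x, Real.exp (-t ^ 2 / 2)

theorem hasDerivAt_integral_Ioi {f : ℝ → ℝ} (hint : Integrable f) (hcont : Continuous f)
    (a : ℝ) : HasDerivAt (fun x => ∫ t in Set.Ioi x, f t) (-f a) a := by
  have hsplit : (fun x => ∫ t in Set.Ioi x, f t)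
      = fun x => (∫ t in Set.Ioi a, f t) - ∫ t in a..x, f t := by
    ext x
    rw [← intervalIntegral.integral_Ioi_sub_Ioi' hint.integrableOn hint.integrableOn]
    ring
  rw [hsplit, ← zero_sub]
  exact (hasDerivAt_const a _).sub <| intervalIntegral.integral_hasDerivAt_right
    hint.intervalIntegrable (hcont.stronglyMeasurableAtFilter _ _) hcont.continuousAt

theorem integrable_exp_neg_sq_div_two : Integrable fun t : ℝ => exp (-t ^ 2 / 2) := by
  simpa [neg_div, div_eq_inv_mul] using integrable_exp_neg_mul_sq (b := 1 / 2) (by norm_num)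

theorem gaussQ_zero : gaussQ 0 = 1 / 2 := by
  have hgauss : ∫ t in Set.Ioi (0 : ℝ), exp (-t ^ 2 / 2) = √(2 * π) / 2 := by
    simpa [neg_div, div_eq_inv_mul, mul_comm] using integral_gaussian_Ioi (1 / 2)
  have hpos : 0 < √(2 * π) := by positivity
  rw [gaussQ, hgauss]
  field_simp

theorem hasDerivAt_gaussQ (x : ℝ) :
    HasDerivAt gaussQ (-(1 / √(2 * π)) * exp (-x ^ 2 / 2)) x := by
  have hQ := (hasDerivAt_integral_Ioi integrable_exp_neg_sq_div_two (by fun_prop) x).const_mul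
    (1 / √(2 * π))
  exact hQ.congr_deriv (by ring)

theorem HasDerivAt.div_of_eq_zero {n d : ℝ → ℝ} {n' d' a : ℝ} (hn : HasDerivAt n n' a)
    (hd : HasDerivAt d d' a) (hna : n a = 0) (hda : d a ≠ 0) :
    HasDerivAt (fun x => n x / d x) (n' / d a) a := by
  refine (hn.div hd hda).congr_deriv ?_
  rw [hna, zero_mul, sub_zero]
  field_simp

theorem sqrt_one_sub_one_div_sq {u : ℝ} (hu : 0 < u) : √(1 - 1 / u ^ 2) = √(u ^ 2 - 1) / u := by
  rw [show 1 - 1 / u ^ 2 = (u ^ 2 - 1) / u ^ 2 by field_simp, sqrt_div' _ (sq_nonneg u),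
    sqrt_sq hu.le]

theorem hasDerivAt_log_sub_div_sqrt_one_sub_one_div_sq (L : ℝ) {R : ℝ} (hR : 0 < R) :
    HasDerivAt (fun u => √L * (log u - R) / √(1 - 1 / u ^ 2))
      (√L / √(exp (2 * R) - 1)) (exp R) := by
  have hE : 0 < exp R := exp_pos R
  have hE2 : 0 < exp R ^ 2 - 1 := by nlinarith [one_lt_exp_iff.2 hR]
  have hsqrt : √(1 - 1 / exp R ^ 2) = √(exp R ^ 2 - 1) / exp R := sqrt_one_sub_one_div_sq hE
  have hnum : HasDerivAt (fun u => √L * (log u - R)) (√L * (1 / exp R)) (exp R) := by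
    simpa only [one_div] using ((hasDerivAt_log hE.ne').sub_const R).const_mul √L
  have hden_pos : 0 < √(1 - 1 / exp R ^ 2) := by rw [hsqrt]; positivity
  have hden : DifferentiableAt ℝ (fun u => √(1 - 1 / u ^ 2)) (exp R) :=
    DifferentiableAt.sqrt (by fun_prop (disch := positivity)) (sqrt_pos.1 hden_pos).ne'
  refine (hnum.div_of_eq_zero hden.hasDerivAt (by simp) hden_pos.ne').congr_deriv ?_
  rw [hsqrt, show exp (2 * R) = exp R ^ 2 by rw [← exp_nat_mul]; norm_num]
  field_simp

theorem stmt2_general (L P R : ℝ) (hP : 0 < P) (hR : 0 < R)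
    (α : ℝ) (hα : α = (Real.exp R - 1) / P)
    (W : ℝ → ℝ) (hW : W = fun x => gaussQ (Real.sqrt L * (Real.log (1 + x * P) - R) /
      Real.sqrt (1 - 1 / (1 + x * P) ^ 2))) :
    W α = 1 / 2 ∧
      HasDerivAt W (-Real.sqrt (L * P ^ 2 / (2 * Real.pi * (Real.exp (2 * R) - 1)))) α := by
  have hu : 1 + α * P = exp R := by
    rw [hα]
    field_simp
    ring
  have harg : √L * (log (1 + α * P) - R) / √(1 - 1 / (1 + α * P) ^ 2) = 0 := by
    rw [hu, log_exp, sub_self, mul_zero, zero_div]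
  subst hW
  refine ⟨by simp only [harg, gaussQ_zero], ?_⟩
  have hlin : HasDerivAt (fun x => 1 + x * P) P α := by
    simpa using ((hasDerivAt_id α).mul_const P).const_add 1
  have hQ : HasDerivAt gaussQ (-(1 / √(2 * π))) 0 := by simpa using hasDerivAt_gaussQ 0
  have hW' := hQ.comp_of_eq α
    ((hasDerivAt_log_sub_div_sqrt_one_sub_one_div_sq L hR).comp_of_eq α hlin hu.symm) harg.symm
  refine hW'.congr_deriv ?_
  have hE2 : 0 < exp (2 * R) - 1 := by linarith [one_lt_exp_iff.2 (by linarith : 0 < 2 * R)]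
  rw [sqrt_div' _ (by positivity), sqrt_mul' L (sq_nonneg P), sqrt_sq hP.le,
    sqrt_mul (by positivity : (0 : ℝ) ≤ 2 * π) (exp (2 * R) - 1)]
  field_simp

/-- Value and derivative of the finite block-length error-probability function at
α = (e^R − 1)/P, justifying the tangent-line slope μ = √(LP²/(2π(e^{2R}−1))). -/
theorem stmt2 (L P R : ℝ) (hL : 0 < L) (hP : 0 < P) (hR : 0 < R)
    (α : ℝ) (hα : α = (Real.exp R - 1) / P)
    (W : ℝ → ℝ) (hW : W = fun x => gaussQ (Real.sqrt L * (Real.log (1 + x * P) - R) /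
      Real.sqrt (1 - 1 / (1 + x * P) ^ 2))) :
    W α = 1 / 2 ∧
      HasDerivAt W (-Real.sqrt (L * P ^ 2 / (2 * Real.pi * (Real.exp (2 * R) - 1)))) α :=
  stmt2_general L P R hP hR α hα W hW
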